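/- arXiv:2209.05181 — 9 statements merged into one kernel-verified Lean document; each statement's English description precedes it below -/
import Mathlib

section
/- Let A₁A₂A₃ be a triangle in the plane and A₀ an interior point. If weights b₁, b₂, b₃ are defined by bᵢ = C / (1 + sin(α_{i0j})/sin(α_{j0k}) + sin(α_{i0k})/sin(α_{j0k})) for {i,j,k} = {1,2,3}, where α_{i0j} denotes the angle ∠AᵢA₀Aⱼ, then b₁·u(A₀,A₁) + b₂·u(A₀,A₂) + b₃·u(A₀,A₃) = 0, where u(A₀,Aᵢ) is the unit vector from A₀ toward Aᵢ. In particular A₀ is the minimizer of x ↦ b₁|xA₁| + b₂|xA₂| + b₃|xA₃|. -/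
/-!
Write `A₀ = l₁ A₁ + l₂ A₂ + l₃ A₃` in barycentric coordinates; they are positive because `A₀` is
interior. Each `lᵢ` is the ratio of the signed area of the triangle `A₀AⱼAₖ` to that of
`A₁A₂A₃`, so `sin α_{j0k} · |A₀Aⱼ| · |A₀Aₖ| = lᵢ · K` for one constant `K > 0`. Dividing
`∑ lᵢ (Aᵢ - A₀) = 0` by `|A₀A₁| |A₀A₂| |A₀A₃|` gives `∑ sin α_{j0k} · u(A₀, Aᵢ) = 0`, and the
weights `bᵢ` are exactly `C · sin α_{j0k} / ∑ sin`. Finally, `-u(A₀, Aᵢ)` is a subgradient of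
`x ↦ |xAᵢ|` at `A₀`, so a vanishing nonnegative combination of these makes `A₀` a minimiser of
the convex function `∑ bᵢ |xAᵢ|`.
-/

open scoped RealInnerProductSpace
open Module Set EuclideanGeometry AffineSubspace

section WeightedDistance

variable {E : Type*} [NormedAddCommGroup E] [InnerProductSpace ℝ E]

-- The subgradient inequality for `x ↦ dist x A` at `p`; at `p = A` the junk unit vector `0` is
-- still a subgradient.
theorem dist_le_dist_add_inner_smul_sub (p x A : E) :
    dist p A ≤ dist x A + ⟪‖A - p‖⁻¹ • (A - p), x - p⟫ := by
  rcases eq_or_ne A p with rfl | hA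
  · simp [dist_nonneg]
  have hne : ‖A - p‖ ≠ 0 := norm_ne_zero_iff.2 (sub_ne_zero.2 hA)
  have hsplit : ⟪‖A - p‖⁻¹ • (A - p), x - p⟫ = ‖A - p‖ - ⟪‖A - p‖⁻¹ • (A - p), A - x⟫ := by
    rw [show x - p = (A - p) - (A - x) by abel, inner_sub_right, real_inner_smul_left,
      real_inner_self_eq_norm_sq, pow_two, inv_mul_cancel_left₀ hne]
  have hcs : ⟪‖A - p‖⁻¹ • (A - p), A - x⟫ ≤ dist x A := by
    have hunit : ‖‖A - p‖⁻¹ • (A - p)‖ = 1 := by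
      rw [norm_smul, norm_inv, norm_norm, inv_mul_cancel₀ hne]
    simpa only [hunit, one_mul, dist_comm x, dist_eq_norm] using
      real_inner_le_norm (‖A - p‖⁻¹ • (A - p)) (A - x)
  rw [hsplit, dist_comm, dist_eq_norm]
  linarith

theorem sum_mul_dist_le_of_sum_smul_eq_zero {ι : Type*} (s : Finset ι) (A : ι → E) {b : ι → ℝ}
    (hb : ∀ i ∈ s, 0 ≤ b i) {p : E} (h : ∑ i ∈ s, b i • (‖A i - p‖⁻¹ • (A i - p)) = 0) (x : E) :
    ∑ i ∈ s, b i * dist p (A i) ≤ ∑ i ∈ s, b i * dist x (A i) :=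
  calc ∑ i ∈ s, b i * dist p (A i)
      ≤ ∑ i ∈ s, b i * (dist x (A i) + ⟪‖A i - p‖⁻¹ • (A i - p), x - p⟫) :=
        Finset.sum_le_sum fun i hi =>
          mul_le_mul_of_nonneg_left (dist_le_dist_add_inner_smul_sub p x (A i)) (hb i hi)
    _ = ∑ i ∈ s, b i * dist x (A i) + ⟪∑ i ∈ s, b i • (‖A i - p‖⁻¹ • (A i - p)), x - p⟫ := by
        simp only [mul_add, Finset.sum_add_distrib, sum_inner, real_inner_smul_left]
    _ = ∑ i ∈ s, b i * dist x (A i) := by rw [h, inner_zero_left, add_zero]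

end WeightedDistance

section Barycentric

variable {E : Type*} [NormedAddCommGroup E] [NormedSpace ℝ E]

theorem affineIndependent_of_nonempty_interior_convexHull {ι : Type*} [Fintype ι] {p : ι → E}
    (hcard : Fintype.card ι = finrank ℝ E + 1) (h : (interior (convexHull ℝ (range p))).Nonempty) :
    AffineIndependent ℝ p := by
  rw [affineIndependent_iff_le_finrank_vectorSpan ℝ p hcard,
    vectorSpan_eq_top_of_affineSpan_eq_top ℝ E E (affineSpan_eq_top_of_nonempty_interior h),
    finrank_top]

theorem exists_pos_coord_of_mem_interior_convexHull {ι : Type*} [Fintype ι] {p : ι → E}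
    (hcard : Fintype.card ι = finrank ℝ E + 1) {x : E}
    (hx : x ∈ interior (convexHull ℝ (range p))) :
    ∃ l : ι → ℝ, (∀ i, 0 < l i) ∧ ∑ i, l i = 1 ∧ ∑ i, l i • p i = x := by
  let b : AffineBasis ι ℝ E :=
    ⟨p, affineIndependent_of_nonempty_interior_convexHull hcard ⟨x, hx⟩,
      affineSpan_eq_top_of_nonempty_interior ⟨x, hx⟩⟩
  have hx' : x ∈ interior (convexHull ℝ (range b)) := hx
  rw [b.interior_convexHull] at hx'
  exact ⟨fun i => b.coord i x, hx', b.sum_coord_apply_eq_one x,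
    b.linear_combination_coord_eq_self x⟩

theorem linearIndependent_sub_of_nonempty_interior_convexHull (hE : finrank ℝ E = 2)
    {A₁ A₂ A₃ : E} (h : (interior (convexHull ℝ {A₁, A₂, A₃})).Nonempty) :
    LinearIndependent ℝ ![A₂ - A₁, A₃ - A₁] := by
  refine linearIndependent_of_top_le_span_of_card_eq_finrank ?_ (by simp [hE])
  have hspan :=
    vectorSpan_eq_top_of_affineSpan_eq_top ℝ E E (affineSpan_eq_top_of_nonempty_interior h)
  rw [vectorSpan_eq_span_vsub_set_right ℝ (mem_insert A₁ _)] at hspan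
  simpa [image_insert_eq, Submodule.span_insert_zero, Matrix.range_cons, singleton_union,
    pair_comm] using hspan.ge

end Barycentric

namespace Orientation

variable {E : Type*} [NormedAddCommGroup E] [InnerProductSpace ℝ E] [Fact (finrank ℝ E = 2)]
  (o : Orientation ℝ E (Fin 2))

local notation "ω" => o.areaForm

theorem sin_angle_mul_norm_mul_norm_eq_abs_areaForm (x y : E) :
    Real.sin (InnerProductGeometry.angle x y) * (‖x‖ * ‖y‖) = |ω x y| := by
  rw [InnerProductGeometry.sin_angle_mul_norm_mul_norm, ← Real.sqrt_sq_eq_abs,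
    real_inner_self_eq_norm_sq, real_inner_self_eq_norm_sq]
  congr 1
  linear_combination -o.inner_sq_add_areaForm_sq x y

theorem areaForm_ne_zero_of_linearIndependent {x y : E} (h : LinearIndependent ℝ ![x, y]) :
    ω x y ≠ 0 := by
  intro h0
  refine sameRay_or_sameRay_neg_iff_not_linearIndependent.1 ?_ h
  rcases le_total 0 ⟪x, y⟫ with hxy | hxy
  · exact .inl ((o.nonneg_inner_and_areaForm_eq_zero_iff_sameRay x y).1 ⟨hxy, h0⟩)
  · exact .inr ((o.nonneg_inner_and_areaForm_eq_zero_iff_sameRay x (-y)).1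
      ⟨by simpa using hxy, by simpa using h0⟩)

theorem areaForm_sub_sub_rotate (A₁ A₂ A₃ : E) :
    ω (A₃ - A₂) (A₁ - A₂) = ω (A₂ - A₁) (A₃ - A₁) := by
  rw [show A₃ - A₂ = (A₃ - A₁) - (A₂ - A₁) by abel, show A₁ - A₂ = -(A₂ - A₁) by abel]
  generalize A₂ - A₁ = a, A₃ - A₁ = b
  simp only [map_sub, map_neg, LinearMap.sub_apply, o.areaForm_apply_self, o.areaForm_swap b]
  ring

theorem areaForm_sub_sub_eq_mul {A₁ A₂ A₃ : E} {l₁ l₂ l₃ : ℝ} (hl : l₁ + l₂ + l₃ = 1) :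
    ω (A₂ - (l₁ • A₁ + l₂ • A₂ + l₃ • A₃)) (A₃ - (l₁ • A₁ + l₂ • A₂ + l₃ • A₃))
      = l₁ * ω (A₂ - A₁) (A₃ - A₁) := by
  obtain rfl : l₁ = 1 - l₂ - l₃ := by linarith
  rw [show A₂ - ((1 - l₂ - l₃) • A₁ + l₂ • A₂ + l₃ • A₃) = (1 - l₂) • (A₂ - A₁) - l₃ • (A₃ - A₁) by
      module,
    show A₃ - ((1 - l₂ - l₃) • A₁ + l₂ • A₂ + l₃ • A₃) = (1 - l₃) • (A₃ - A₁) - l₂ • (A₂ - A₁) by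
      module]
  generalize A₂ - A₁ = a, A₃ - A₁ = b
  simp only [map_sub, map_smul, LinearMap.sub_apply, LinearMap.smul_apply, smul_eq_mul,
    o.areaForm_apply_self, o.areaForm_swap b]
  ring

theorem sin_angle_mul_norm_mul_norm_eq_mul_abs_areaForm {A₀ A₁ A₂ A₃ : E} {l₁ l₂ l₃ : ℝ}
    (hl₁ : 0 ≤ l₁) (hl : l₁ + l₂ + l₃ = 1) (hA₀ : l₁ • A₁ + l₂ • A₂ + l₃ • A₃ = A₀) :
    Real.sin (∠ A₂ A₀ A₃) * (‖A₂ - A₀‖ * ‖A₃ - A₀‖) = l₁ * |ω (A₂ - A₁) (A₃ - A₁)| := by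
  rw [EuclideanGeometry.angle, vsub_eq_sub, vsub_eq_sub,
    o.sin_angle_mul_norm_mul_norm_eq_abs_areaForm, ← hA₀, o.areaForm_sub_sub_eq_mul hl, abs_mul,
    abs_of_nonneg hl₁]

end Orientation

section Triangle

variable {E : Type*} [NormedAddCommGroup E] [InnerProductSpace ℝ E] [Fact (finrank ℝ E = 2)]

attribute [local instance] FiniteDimensional.of_fact_finrank_eq_two

theorem exists_sin_angle_mul_norm_mul_norm_eq_of_mem_interior_convexHull {A₀ A₁ A₂ A₃ : E}
    (h : A₀ ∈ interior (convexHull ℝ {A₁, A₂, A₃})) :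
    ∃ l₁ l₂ l₃ K : ℝ, 0 < l₁ ∧ 0 < l₂ ∧ 0 < l₃ ∧ 0 < K ∧
      l₁ • (A₁ - A₀) + l₂ • (A₂ - A₀) + l₃ • (A₃ - A₀) = 0 ∧
      Real.sin (∠ A₂ A₀ A₃) * (‖A₂ - A₀‖ * ‖A₃ - A₀‖) = l₁ * K ∧
      Real.sin (∠ A₁ A₀ A₃) * (‖A₁ - A₀‖ * ‖A₃ - A₀‖) = l₂ * K ∧
      Real.sin (∠ A₁ A₀ A₂) * (‖A₁ - A₀‖ * ‖A₂ - A₀‖) = l₃ * K := by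
  have hrange : range ![A₁, A₂, A₃] = {A₁, A₂, A₃} := by
    rw [Matrix.range_cons, Matrix.range_cons, Matrix.range_cons, Matrix.range_empty, union_empty,
      singleton_union, singleton_union]
  obtain ⟨l, hl_pos, hl_sum, hl_comb⟩ := exists_pos_coord_of_mem_interior_convexHull
    (p := ![A₁, A₂, A₃]) (by simp [Fact.out]) (hrange ▸ h)
  simp only [Fin.sum_univ_three, Matrix.cons_val_zero, Matrix.cons_val_one, Matrix.cons_val_two,
    Matrix.head_cons, Matrix.tail_cons] at hl_sum hl_comb
  -- Only `|ω|` enters, so any orientation will do.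
  let o : Orientation ℝ E (Fin 2) := (finBasisOfFinrankEq ℝ E Fact.out).orientation
  have hΔ : o.areaForm (A₂ - A₁) (A₃ - A₁) ≠ 0 := o.areaForm_ne_zero_of_linearIndependent
    (linearIndependent_sub_of_nonempty_interior_convexHull Fact.out ⟨A₀, h⟩)
  have hcomb₂ : l 1 • A₂ + l 2 • A₃ + l 0 • A₁ = A₀ := by rw [← hl_comb]; abel
  have hcomb₃ : l 2 • A₃ + l 0 • A₁ + l 1 • A₂ = A₀ := by rw [← hl_comb]; abel
  have h₂ := o.sin_angle_mul_norm_mul_norm_eq_mul_abs_areaForm (hl_pos 1).le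
    (by linear_combination hl_sum) hcomb₂
  have h₃ := o.sin_angle_mul_norm_mul_norm_eq_mul_abs_areaForm (hl_pos 2).le
    (by linear_combination hl_sum) hcomb₃
  rw [angle_comm, mul_comm ‖A₃ - A₀‖, o.areaForm_sub_sub_rotate] at h₂
  rw [o.areaForm_sub_sub_rotate A₂, o.areaForm_sub_sub_rotate] at h₃
  exact ⟨l 0, l 1, l 2, _, hl_pos 0, hl_pos 1, hl_pos 2, abs_pos.2 hΔ,
    by linear_combination (norm := module) hl_comb - hl_sum • A₀,
    o.sin_angle_mul_norm_mul_norm_eq_mul_abs_areaForm (hl_pos 0).le hl_sum hl_comb, h₂, h₃⟩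

theorem sin_angle_pos_and_sum_smul_eq_zero_of_mem_interior_convexHull {A₀ A₁ A₂ A₃ : E}
    (h : A₀ ∈ interior (convexHull ℝ {A₁, A₂, A₃})) :
    (0 < Real.sin (∠ A₂ A₀ A₃) ∧ 0 < Real.sin (∠ A₁ A₀ A₃) ∧ 0 < Real.sin (∠ A₁ A₀ A₂)) ∧
      Real.sin (∠ A₂ A₀ A₃) • (‖A₁ - A₀‖⁻¹ • (A₁ - A₀))
        + Real.sin (∠ A₁ A₀ A₃) • (‖A₂ - A₀‖⁻¹ • (A₂ - A₀))
        + Real.sin (∠ A₁ A₀ A₂) • (‖A₃ - A₀‖⁻¹ • (A₃ - A₀)) = 0 := by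
  obtain ⟨l₁, l₂, l₃, K, hl₁, hl₂, hl₃, hK, hsum, h₁, h₂, h₃⟩ :=
    exists_sin_angle_mul_norm_mul_norm_eq_of_mem_interior_convexHull h
  have hprod₁ := h₁ ▸ mul_pos hl₁ hK
  have hprod₂ := h₂ ▸ mul_pos hl₂ hK
  have hprod₃ := h₃ ▸ mul_pos hl₃ hK
  refine ⟨⟨pos_of_mul_pos_left hprod₁ (by positivity), pos_of_mul_pos_left hprod₂ (by positivity),
    pos_of_mul_pos_left hprod₃ (by positivity)⟩, ?_⟩
  have hr₁ : 0 < ‖A₁ - A₀‖ :=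
    pos_of_mul_pos_left (pos_of_mul_pos_right hprod₂ (InnerProductGeometry.sin_angle_nonneg _ _))
      (norm_nonneg _)
  have hr₂₃ := pos_of_mul_pos_right hprod₁ (InnerProductGeometry.sin_angle_nonneg _ _)
  have hr₂ : 0 < ‖A₂ - A₀‖ := pos_of_mul_pos_left hr₂₃ (norm_nonneg _)
  have hr₃ : 0 < ‖A₃ - A₀‖ := pos_of_mul_pos_right hr₂₃ (norm_nonneg _)
  obtain ⟨c, hc⟩ : ∃ c, c = K / (‖A₁ - A₀‖ * ‖A₂ - A₀‖ * ‖A₃ - A₀‖) := ⟨_, rfl⟩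
  have e₁ : Real.sin (∠ A₂ A₀ A₃) * ‖A₁ - A₀‖⁻¹ = c * l₁ := by
    rw [hc]; field_simp; linear_combination h₁
  have e₂ : Real.sin (∠ A₁ A₀ A₃) * ‖A₂ - A₀‖⁻¹ = c * l₂ := by
    rw [hc]; field_simp; linear_combination h₂
  have e₃ : Real.sin (∠ A₁ A₀ A₂) * ‖A₃ - A₀‖⁻¹ = c * l₃ := by
    rw [hc]; field_simp; linear_combination h₃
  rw [smul_smul, smul_smul, smul_smul, e₁, e₂, e₃, mul_smul, mul_smul, mul_smul, ← smul_add,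
    ← smul_add, hsum, smul_zero]

end Triangle

theorem div_one_add_div_add_div {K : Type*} [Field K] {C a b s : K} (hs : s ≠ 0) :
    C / (1 + a / s + b / s) = C * s / (s + a + b) := by
  rw [show 1 + a / s + b / s = (s + a + b) / s by field_simp, div_div_eq_mul_div]

/-- Gueron–Tessler: solution of the inverse weighted Fermat problem for a
triangle in the plane. -/
theorem inverse_weighted_fermat_triangle
    (A₁ A₂ A₃ A₀ : EuclideanSpace ℝ (Fin 2)) (C : ℝ) (hC : 0 < C)
    (hint : A₀ ∈ interior (convexHull ℝ ({A₁, A₂, A₃} : Set (EuclideanSpace ℝ (Fin 2)))))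
    (b₁ b₂ b₃ : ℝ)
    (hb₁ : b₁ = C / (1 + Real.sin (∠ A₁ A₀ A₂) / Real.sin (∠ A₂ A₀ A₃)
        + Real.sin (∠ A₁ A₀ A₃) / Real.sin (∠ A₂ A₀ A₃)))
    (hb₂ : b₂ = C / (1 + Real.sin (∠ A₂ A₀ A₁) / Real.sin (∠ A₁ A₀ A₃)
        + Real.sin (∠ A₂ A₀ A₃) / Real.sin (∠ A₁ A₀ A₃)))
    (hb₃ : b₃ = C / (1 + Real.sin (∠ A₃ A₀ A₁) / Real.sin (∠ A₁ A₀ A₂)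
        + Real.sin (∠ A₃ A₀ A₂) / Real.sin (∠ A₁ A₀ A₂))) :
    b₁ • (‖A₁ - A₀‖⁻¹ • (A₁ - A₀)) + b₂ • (‖A₂ - A₀‖⁻¹ • (A₂ - A₀))
      + b₃ • (‖A₃ - A₀‖⁻¹ • (A₃ - A₀)) = 0 ∧
    ∀ x : EuclideanSpace ℝ (Fin 2),
      b₁ * dist A₀ A₁ + b₂ * dist A₀ A₂ + b₃ * dist A₀ A₃ ≤
        b₁ * dist x A₁ + b₂ * dist x A₂ + b₃ * dist x A₃ := by
  have : Fact (finrank ℝ (EuclideanSpace ℝ (Fin 2)) = 2) := ⟨finrank_euclideanSpace_fin⟩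
  obtain ⟨⟨h₂₃, h₁₃, h₁₂⟩, hsum⟩ :=
    sin_angle_pos_and_sum_smul_eq_zero_of_mem_interior_convexHull hint
  rw [angle_comm A₂ A₀ A₁] at hb₂
  rw [angle_comm A₃ A₀ A₁, angle_comm A₃ A₀ A₂] at hb₃
  obtain ⟨S, hS⟩ : ∃ S, S = Real.sin (∠ A₂ A₀ A₃) + Real.sin (∠ A₁ A₀ A₃) + Real.sin (∠ A₁ A₀ A₂) :=
    ⟨_, rfl⟩
  have hb₁' : b₁ = C / S * Real.sin (∠ A₂ A₀ A₃) := by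
    rw [hb₁, div_one_add_div_add_div h₂₃.ne', hS]; ring
  have hb₂' : b₂ = C / S * Real.sin (∠ A₁ A₀ A₃) := by
    rw [hb₂, div_one_add_div_add_div h₁₃.ne', hS]; ring
  have hb₃' : b₃ = C / S * Real.sin (∠ A₁ A₀ A₂) := by
    rw [hb₃, div_one_add_div_add_div h₁₂.ne', hS]; ring
  have hbalance : b₁ • (‖A₁ - A₀‖⁻¹ • (A₁ - A₀)) + b₂ • (‖A₂ - A₀‖⁻¹ • (A₂ - A₀))
      + b₃ • (‖A₃ - A₀‖⁻¹ • (A₃ - A₀)) = 0 := by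
    rw [hb₁', hb₂', hb₃', mul_smul, mul_smul, mul_smul, ← smul_add, ← smul_add, hsum, smul_zero]
  have hCS : 0 ≤ C / S := by rw [hS]; positivity
  have hb_nonneg : ∀ i, 0 ≤ ![b₁, b₂, b₃] i := by
    intro i; fin_cases i
    exacts [hb₁' ▸ mul_nonneg hCS h₂₃.le, hb₂' ▸ mul_nonneg hCS h₁₃.le,
      hb₃' ▸ mul_nonneg hCS h₁₂.le]
  refine ⟨hbalance, fun x => ?_⟩
  simpa [Fin.sum_univ_three] using sum_mul_dist_le_of_sum_smul_eq_zero Finset.univ ![A₁, A₂, A₃]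
    (fun i _ => hb_nonneg i) (p := A₀) (by simpa [Fin.sum_univ_three] using hbalance) x
end

section
/- Let b₁, …, b_m be positive weights and A₁, …, A_m points in ℝ^N (m ≥ 3, not all collinear). If for every i one has ‖Σ_{j≠i} bⱼ·u(Aⱼ, Aᵢ)‖ > bᵢ, then the unique minimizer A₀ of f(x) = Σᵢ bᵢ|x − Aᵢ| satisfies A₀ ∉ {A₁,…,A_m} and Σᵢ bᵢ·u(A₀, Aᵢ) = 0. -/
/-!
The weighted distance sum `f x = ∑ bᵢ ‖x - Aᵢ‖` is coercive, so it has a minimizer. If `y ≠ z`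
both minimize `f`, then `f` at their midpoint is no larger, which forces `‖(y - Aᵢ) + (z - Aᵢ)‖ =
‖y - Aᵢ‖ + ‖z - Aᵢ‖` for every `i`; by strict convexity of the norm every `Aᵢ` then lies on the
line `yz`. Near a vertex `Aᵢ`, `f` is `bᵢ ‖x - Aᵢ‖` plus a function with gradient
`Wᵢ = ∑_{j ≠ i} bⱼ u(Aⱼ, Aᵢ)`, so moving from `Aᵢ` towards `-Wᵢ` decreases `f` as soon as
`‖Wᵢ‖ > bᵢ`. Away from the vertices `f` is differentiable with gradient `-∑ bᵢ u(x, Aᵢ)`, which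
vanishes at the minimizer.
-/

open Set Filter RealInnerProductSpace

noncomputable section

section FermatWeber

variable {ι P : Type*} [Fintype ι] [PseudoMetricSpace P]

def fermatWeber (b : ι → ℝ) (A : ι → P) (x : P) : ℝ := ∑ i, b i * dist x (A i)

theorem continuous_fermatWeber (b : ι → ℝ) (A : ι → P) : Continuous (fermatWeber b A) := by
  unfold fermatWeber; fun_prop

theorem exists_forall_fermatWeber_le [ProperSpace P] [Nonempty P] {b : ι → ℝ}
    (hb : ∀ i, 0 < b i) (A : ι → P) : ∃ x₀, ∀ x, fermatWeber b A x₀ ≤ fermatWeber b A x := by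
  cases isEmpty_or_nonempty ι with
  | inl _ => exact ⟨Classical.arbitrary P, fun x => by simp [fermatWeber]⟩
  | inr hι =>
    obtain ⟨i⟩ := hι
    refine (continuous_fermatWeber b A).exists_forall_le <| tendsto_atTop_mono (fun x => ?_)
      ((tendsto_dist_right_cocompact_atTop (A i)).const_mul_atTop (hb i))
    exact Finset.single_le_sum (f := fun j => b j * dist x (A j))
      (fun j _ => mul_nonneg (hb j).le dist_nonneg) (Finset.mem_univ i)

end FermatWeber

theorem collinear_of_subset_affineSpan_pair {k V P : Type*} [Field k] [AddCommGroup V]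
    [Module k V] [AddTorsor V P] {s : Set P} {y z : P} (h : s ⊆ line[k, y, z]) :
    Collinear k s := by
  rw [collinear_iff_exists_forall_eq_smul_vadd]
  refine ⟨y, z -ᵥ y, fun p hp => ?_⟩
  obtain ⟨r, rfl⟩ := mem_affineSpan_pair_iff_exists_lineMap_eq.1 (h hp)
  exact ⟨r, AffineMap.lineMap_apply _ _ _⟩

section StrictConvex

variable {E : Type*} [NormedAddCommGroup E] [NormedSpace ℝ E]

theorem two_mul_dist_midpoint (y z a : E) :
    2 * dist (midpoint ℝ y z) a = ‖(y - a) + (z - a)‖ := by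
  have : midpoint ℝ y z - a = (2 : ℝ)⁻¹ • ((y - a) + (z - a)) := by
    rw [midpoint_eq_smul_add, invOf_eq_inv]; module
  rw [dist_eq_norm, this, norm_smul, norm_inv, Real.norm_two, ← mul_assoc,
    mul_inv_cancel₀ two_ne_zero, one_mul]

theorem mem_affineSpan_pair_of_dist_add_dist_le [StrictConvexSpace ℝ E] {a y z : E} (hyz : y ≠ z)
    (h : dist y a + dist z a ≤ 2 * dist (midpoint ℝ y z) a) : a ∈ line[ℝ, y, z] := by
  have hray : SameRay ℝ (y -ᵥ a) (z -ᵥ a) := by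
    rw [vsub_eq_sub, vsub_eq_sub, sameRay_iff_norm_add]
    rw [two_mul_dist_midpoint, dist_eq_norm, dist_eq_norm] at h
    exact le_antisymm (norm_add_le _ _) h
  have hcol : Collinear ℝ ({a, y, z} : Set E) := by
    rcases wbtw_total_of_sameRay_vsub_left hray with h | h
    · exact h.collinear
    · rw [Set.pair_comm]; exact h.collinear
  exact hcol.mem_affineSpan_of_mem_of_ne (by simp) (by simp) (by simp) hyz

theorem collinear_of_forall_fermatWeber_le [StrictConvexSpace ℝ E] {ι : Type*} [Fintype ι]
    {b : ι → ℝ} (hb : ∀ i, 0 < b i) (A : ι → E) {y z : E}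
    (hy : ∀ x, fermatWeber b A y ≤ fermatWeber b A x)
    (hz : ∀ x, fermatWeber b A z ≤ fermatWeber b A x) (hyz : y ≠ z) :
    Collinear ℝ (range A) := by
  refine collinear_of_subset_affineSpan_pair (y := y) (z := z) ?_
  rintro _ ⟨i, rfl⟩
  refine mem_affineSpan_pair_of_dist_add_dist_le hyz ?_
  set m := midpoint ℝ y z
  have hgap : ∀ j, 0 ≤ dist y (A j) + dist z (A j) - 2 * dist m (A j) := fun j => by
    have := dist_midpoint_midpoint_le y z (A j) (A j)
    rw [midpoint_self] at this
    linarith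
  have hsum : ∑ j, b j * (dist y (A j) + dist z (A j) - 2 * dist m (A j)) =
      fermatWeber b A y + fermatWeber b A z - 2 * fermatWeber b A m := by
    simp only [fermatWeber, Finset.mul_sum, ← Finset.sum_add_distrib, ← Finset.sum_sub_distrib]
    exact Finset.sum_congr rfl fun j _ => by ring
  have hzero := (Finset.sum_eq_zero_iff_of_nonneg fun j _ => mul_nonneg (hb j).le (hgap j)).1
    (le_antisymm (by linarith [hy m, hz m]) (Finset.sum_nonneg fun j _ =>
      mul_nonneg (hb j).le (hgap j))) i (Finset.mem_univ i)
  linarith [(mul_eq_zero.1 hzero).resolve_left (hb i).ne']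

end StrictConvex

section InnerProduct

variable {E : Type*} [NormedAddCommGroup E] [InnerProductSpace ℝ E]

def unitVec (p q : E) : E := ‖q - p‖⁻¹ • (q - p)

theorem unitVec_swap (p q : E) : unitVec q p = -unitVec p q := by
  rw [unitVec, unitVec, norm_sub_rev, ← smul_neg, neg_sub]

theorem hasFDerivAt_dist_right {x a : E} (hx : x ≠ a) :
    HasFDerivAt (fun y => dist y a) (innerSL ℝ (unitVec a x)) x := by
  have h := ((hasStrictFDerivAt_norm_sq (x - a)).hasFDerivAt.comp x
    ((hasFDerivAt_id x).sub_const a)).sqrt (by simpa [sub_eq_zero] using hx)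
  convert h using 1
  · ext y
    simp [dist_eq_norm, Real.sqrt_sq (norm_nonneg _)]
  · ext v
    simp only [unitVec, map_smul, smul_apply, coe_innerSL_apply, smul_eq_mul, id_eq,
      Function.comp_apply, Real.sqrt_sq (norm_nonneg _), one_div, mul_inv_rev,
      ContinuousLinearMap.comp_id, nsmul_eq_mul, Nat.cast_ofNat]
    field_simp

theorem hasFDerivAt_sum_mul_dist {ι : Type*} (s : Finset ι) (b : ι → ℝ) (A : ι → E) {x : E}
    (hx : ∀ i ∈ s, x ≠ A i) :
    HasFDerivAt (fun y => ∑ i ∈ s, b i * dist y (A i))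
      (innerSL ℝ (∑ i ∈ s, b i • unitVec (A i) x)) x := by
  rw [map_sum]
  refine HasFDerivAt.fun_sum fun i hi => ?_
  simpa [map_smul] using (hasFDerivAt_dist_right (hx i hi)).const_mul (b i)

theorem norm_le_of_forall_le_mul_dist_add {g : E → ℝ} {a W : E} {c : ℝ} (hc : 0 ≤ c)
    (hg : HasFDerivAt g (innerSL ℝ W) a) (hmin : ∀ x, g a ≤ c * dist x a + g x) : ‖W‖ ≤ c := by
  rcases eq_or_ne W 0 with rfl | hW
  · simpa using hc
  set e := -(‖W‖⁻¹ • W)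
  have he : ‖e‖ = 1 := by
    simp [e, norm_smul, hW]
  -- on the segment `[a, a + e]` the distance to `a` is the linear function `⟪e, · - a⟫`
  have hseg : ∀ x ∈ segment ℝ a (a + e), dist x a = ⟪e, x - a⟫ := by
    rw [segment_eq_image']
    rintro _ ⟨t, ⟨ht, -⟩, rfl⟩
    simp [dist_eq_norm, norm_smul, he, real_inner_smul_right, abs_of_nonneg ht]
  have hloc : IsLocalMinOn (fun x => c * ⟪e, x - a⟫ + g x) (segment ℝ a (a + e)) a :=
    IsMinOn.localize fun x hx => by simpa [← hseg x hx] using hmin x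
  have hF : HasFDerivAt (fun x => c * ⟪e, x - a⟫ + g x) (c • innerSL ℝ e + innerSL ℝ W) a := by
    refine HasFDerivAt.add ?_ hg
    simpa only [innerSL_apply_apply, ← inner_sub_right] using
      ((innerSL ℝ e).hasFDerivAt (x := a)).sub_const ⟪e, a⟫ |>.const_mul c
  have := hloc.hasFDerivWithinAt_nonneg hF.hasFDerivWithinAt
    (mem_posTangentConeAt_of_segment_subset subset_rfl)
  have hWe : ⟪W, e⟫ = -‖W‖ := by
    simp only [e, inner_neg_right, real_inner_smul_right, real_inner_self_eq_norm_sq]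
    field_simp
  simp only [add_apply, smul_apply, innerSL_apply_apply, real_inner_self_eq_norm_sq, he, hWe,
    one_pow, smul_eq_mul, mul_one] at this
  linarith

variable {ι : Type*} [Fintype ι]

theorem norm_sum_erase_smul_unitVec_le [DecidableEq ι] {b : ι → ℝ} {A : ι → E}
    (hA : Function.Injective A) {i : ι} (hbi : 0 ≤ b i)
    (hmin : ∀ x, fermatWeber b A (A i) ≤ fermatWeber b A x) :
    ‖∑ j ∈ Finset.univ.erase i, b j • unitVec (A j) (A i)‖ ≤ b i := by
  refine norm_le_of_forall_le_mul_dist_add hbi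
    (hasFDerivAt_sum_mul_dist _ b A fun j hj h => Finset.ne_of_mem_erase hj (hA h.symm))
    fun x => ?_
  have := hmin x
  rwa [fermatWeber, fermatWeber, ← Finset.add_sum_erase _ _ (Finset.mem_univ i),
    ← Finset.add_sum_erase _ _ (Finset.mem_univ i), dist_self, mul_zero, zero_add] at this

theorem sum_smul_unitVec_eq_zero_of_forall_le {b : ι → ℝ} {A : ι → E} {x₀ : E}
    (hx₀ : x₀ ∉ range A) (hmin : ∀ x, fermatWeber b A x₀ ≤ fermatWeber b A x) :
    ∑ i, b i • unitVec (A i) x₀ = 0 := by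
  have h := IsLocalMin.hasFDerivAt_eq_zero (Eventually.of_forall hmin)
    (hasFDerivAt_sum_mul_dist Finset.univ b A fun i _ h => hx₀ ⟨i, h.symm⟩)
  rw [← norm_eq_zero, ← innerSL_apply_norm ℝ, h, norm_zero]

end InnerProduct

end

theorem weighted_floating_fermat_general
    (N m : ℕ)
    (A : Fin m → EuclideanSpace ℝ (Fin N)) (b : Fin m → ℝ)
    (hb : ∀ i, 0 < b i) (hinj : Function.Injective A)
    (hncol : ¬ Collinear ℝ (Set.range A))
    (u : EuclideanSpace ℝ (Fin N) → EuclideanSpace ℝ (Fin N) → EuclideanSpace ℝ (Fin N))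
    (hu : ∀ P Q, u P Q = ‖Q - P‖⁻¹ • (Q - P))
    (hfloat : ∀ i, b i < ‖∑ j ∈ Finset.univ.erase i, b j • u (A j) (A i)‖) :
    ∃ A₀ : EuclideanSpace ℝ (Fin N),
      (∀ x, ∑ i, b i * dist A₀ (A i) ≤ ∑ i, b i * dist x (A i)) ∧
      (∀ y, (∀ x, ∑ i, b i * dist y (A i) ≤ ∑ i, b i * dist x (A i)) → y = A₀) ∧
      A₀ ∉ Set.range A ∧
      ∑ i, b i • u A₀ (A i) = 0 := by
  obtain rfl : u = unitVec := funext₂ hu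
  obtain ⟨A₀, hA₀⟩ := exists_forall_fermatWeber_le hb A
  have hA₀A : A₀ ∉ range A := by
    rintro ⟨i, rfl⟩
    exact (hfloat i).not_ge (norm_sum_erase_smul_unitVec_le hinj (hb i).le hA₀)
  refine ⟨A₀, hA₀, fun y hy => ?_, hA₀A, ?_⟩
  · by_contra hne
    exact hncol (collinear_of_forall_fermatWeber_le hb A hy hA₀ hne)
  · simp only [unitVec_swap _ A₀, smul_neg, Finset.sum_neg_distrib,
      sum_smul_unitVec_eq_zero_of_forall_le hA₀A hA₀, neg_zero]

/-- Sturm / Kupitz–Martini: the weighted floating Fermat tree characterization.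
`u P Q = (Q - P)/‖Q - P‖` is the unit vector from `P` toward `Q`. -/
theorem weighted_floating_fermat
    (N m : ℕ) (hm : 3 ≤ m)
    (A : Fin m → EuclideanSpace ℝ (Fin N)) (b : Fin m → ℝ)
    (hb : ∀ i, 0 < b i) (hinj : Function.Injective A)
    (hncol : ¬ Collinear ℝ (Set.range A))
    (u : EuclideanSpace ℝ (Fin N) → EuclideanSpace ℝ (Fin N) → EuclideanSpace ℝ (Fin N))
    (hu : ∀ P Q, u P Q = ‖Q - P‖⁻¹ • (Q - P))
    (hfloat : ∀ i, b i < ‖∑ j ∈ Finset.univ.erase i, b j • u (A j) (A i)‖) :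
    ∃ A₀ : EuclideanSpace ℝ (Fin N),
      (∀ x, ∑ i, b i * dist A₀ (A i) ≤ ∑ i, b i * dist x (A i)) ∧
      (∀ y, (∀ x, ∑ i, b i * dist y (A i) ≤ ∑ i, b i * dist x (A i)) → y = A₀) ∧
      A₀ ∉ Set.range A ∧
      ∑ i, b i • u A₀ (A i) = 0 :=
  weighted_floating_fermat_general N m A b hb hinj hncol u hu hfloat
end

section
/- Let b₁, …, b_m be positive weights and A₁, …, A_m points in ℝ^N not all collinear. If there is an index i with ‖Σ_{j≠i} bⱼ·u(Aⱼ, Aᵢ)‖ ≤ bᵢ, then Aᵢ itself minimizes f(x) = Σⱼ bⱼ|x − Aⱼ| (the weighted absorbed Fermat tree case). -/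
/-!
The weighted distance sum `f x = ∑ⱼ bⱼ |x - Aⱼ|` is convex, and `bⱼ uⱼ` with
`uⱼ = (Aᵢ - Aⱼ) / |Aᵢ - Aⱼ|` is a subgradient of `x ↦ bⱼ |x - Aⱼ|` at `Aᵢ`. Summing these
linear lower bounds over `j ≠ i` leaves the term `⟪∑ⱼ bⱼ uⱼ, x - Aᵢ⟫`, which by Cauchy–Schwarz
and the hypothesis is absorbed by the remaining term `bᵢ |x - Aᵢ|`.
-/

open RealInnerProductSpace

variable {E : Type*} [NormedAddCommGroup E] [InnerProductSpace ℝ E]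

-- For `c = p` the "unit vector" is `0` (as `0⁻¹ = 0`), and the inequality still holds.
theorem dist_add_inner_unit_le_dist (p c x : E) :
    dist c p + ⟪‖c - p‖⁻¹ • (c - p), x - c⟫ ≤ dist x p := by
  have hsplit : ⟪‖c - p‖⁻¹ • (c - p), x - p⟫ = ⟪‖c - p‖⁻¹ • (c - p), x - c⟫ + ‖c - p‖ := by
    simp only [← sub_add_sub_cancel x c p, inner_add_right, real_inner_smul_left,
      real_inner_self_eq_norm_sq]
    rcases eq_or_ne ‖c - p‖ 0 with h | h
    · simp [h]
    · field_simp
  have hunit : ‖‖c - p‖⁻¹ • (c - p)‖ ≤ 1 := by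
    rw [norm_smul, norm_inv, norm_norm]
    exact inv_mul_le_one_of_le₀ le_rfl (norm_nonneg _)
  calc dist c p + ⟪‖c - p‖⁻¹ • (c - p), x - c⟫
      = ⟪‖c - p‖⁻¹ • (c - p), x - p⟫ := by rw [hsplit, dist_eq_norm]; ring
    _ ≤ ‖‖c - p‖⁻¹ • (c - p)‖ * ‖x - p‖ := real_inner_le_norm _ _
    _ ≤ dist x p := by
      rw [dist_eq_norm]
      exact mul_le_of_le_one_left (norm_nonneg _) hunit

theorem sum_mul_dist_add_inner_le_sum_mul_dist {ι : Type*} (s : Finset ι) (w : ι → ℝ)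
    (hw : ∀ j ∈ s, 0 ≤ w j) (p : ι → E) (c x : E) :
    ∑ j ∈ s, w j * dist c (p j) + ⟪∑ j ∈ s, w j • (‖c - p j‖⁻¹ • (c - p j)), x - c⟫ ≤
      ∑ j ∈ s, w j * dist x (p j) := by
  rw [sum_inner, ← Finset.sum_add_distrib]
  refine Finset.sum_le_sum fun j hj => ?_
  rw [real_inner_smul_left, ← mul_add]
  exact mul_le_mul_of_nonneg_left (dist_add_inner_unit_le_dist _ _ _) (hw j hj)

theorem sum_mul_dist_le_of_norm_sum_smul_unit_le {ι : Type*} (s : Finset ι) (w : ι → ℝ)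
    (hw : ∀ j ∈ s, 0 ≤ w j) (p : ι → E) (c : E) (w₀ : ℝ)
    (habs : ‖∑ j ∈ s, w j • (‖c - p j‖⁻¹ • (c - p j))‖ ≤ w₀) (x : E) :
    ∑ j ∈ s, w j * dist c (p j) ≤ w₀ * dist x c + ∑ j ∈ s, w j * dist x (p j) := by
  set g := ∑ j ∈ s, w j • (‖c - p j‖⁻¹ • (c - p j))
  have hinner : -⟪g, x - c⟫ ≤ w₀ * dist x c := by
    rw [dist_eq_norm]
    calc -⟪g, x - c⟫ ≤ ‖g‖ * ‖x - c‖ := (neg_le_abs _).trans (abs_real_inner_le_norm _ _)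
      _ ≤ w₀ * ‖x - c‖ := mul_le_mul_of_nonneg_right habs (norm_nonneg _)
  linarith [sum_mul_dist_add_inner_le_sum_mul_dist s w hw p c x]

theorem weighted_absorbed_fermat_general
    (N m : ℕ)
    (A : Fin m → EuclideanSpace ℝ (Fin N)) (b : Fin m → ℝ)
    (hb : ∀ i, 0 < b i)
    (u : EuclideanSpace ℝ (Fin N) → EuclideanSpace ℝ (Fin N) → EuclideanSpace ℝ (Fin N))
    (hu : ∀ P Q, u P Q = ‖Q - P‖⁻¹ • (Q - P))
    (i : Fin m)
    (habs : ‖∑ j ∈ Finset.univ.erase i, b j • u (A j) (A i)‖ ≤ b i) :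
    ∀ x, ∑ j, b j * dist (A i) (A j) ≤ ∑ j, b j * dist x (A j) := by
  intro x
  obtain rfl : u = fun P Q => ‖Q - P‖⁻¹ • (Q - P) := funext₂ hu
  have key := sum_mul_dist_le_of_norm_sum_smul_unit_le _ b (fun j _ => (hb j).le) A (A i) (b i)
    habs x
  rw [← Finset.add_sum_erase _ _ (Finset.mem_univ i),
    ← Finset.add_sum_erase _ _ (Finset.mem_univ i), dist_self, mul_zero, zero_add]
  exact key

/-- The weighted absorbed Fermat tree case: if at some vertex `Aᵢ` the norm of the
weighted sum of unit vectors from the other vertices is at most `bᵢ`, then `Aᵢ`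
minimizes the weighted sum of distances. -/
theorem weighted_absorbed_fermat
    (N m : ℕ)
    (A : Fin m → EuclideanSpace ℝ (Fin N)) (b : Fin m → ℝ)
    (hb : ∀ i, 0 < b i) (hinj : Function.Injective A)
    (hncol : ¬ Collinear ℝ (Set.range A))
    (u : EuclideanSpace ℝ (Fin N) → EuclideanSpace ℝ (Fin N) → EuclideanSpace ℝ (Fin N))
    (hu : ∀ P Q, u P Q = ‖Q - P‖⁻¹ • (Q - P))
    (i : Fin m)
    (habs : ‖∑ j ∈ Finset.univ.erase i, b j • u (A j) (A i)‖ ≤ b i) :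
    ∀ x, ∑ j, b j * dist (A i) (A j) ≤ ∑ j, b j * dist x (A j) :=
  weighted_absorbed_fermat_general N m A b hb u hu i habs
end

section
/- Let A₀ be an interior point of a tetrahedron A₁A₂A₃A₄ in ℝ³, and let b₁,…,b₄ be positive weights such that Σᵢ bᵢ·u(A₀,Aᵢ) = 0. Then b₃ / (a₀₃·Vol(A₀A₁A₂A₄)) = b₄ / (a₀₄·Vol(A₀A₁A₂A₃)), where a₀ᵢ = |A₀Aᵢ| and Vol denotes the 3-dimensional volume of the tetrahedron. -/
/-!
Dotting the balancing condition with the normal `(A₁ - A₀) × (A₂ - A₀)` of the plane `A₀A₁A₂`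
kills the first two terms and leaves `b₃ / a₀₃ · [v₁ v₂ v₃] + b₄ / a₀₄ · [v₁ v₂ v₄] = 0`, where
`vᵢ = Aᵢ - A₀` and `[·]` is the triple product. Since the volume of a tetrahedron is a fixed
multiple of the absolute triple product of its edge vectors at a vertex, taking absolute values
gives the identity.
-/

open MeasureTheory Matrix WithLp Pointwise

def standardSimplexVertices (ι : Type*) [DecidableEq ι] : Set (EuclideanSpace ℝ ι) :=
  insert 0 (Set.range fun i => EuclideanSpace.single i 1)

theorem volume_convexHull_insert_range {ι : Type*} [Fintype ι] [DecidableEq ι]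
    (p : EuclideanSpace ℝ ι) (q : ι → EuclideanSpace ℝ ι) :
    volume (convexHull ℝ (insert p (Set.range q))) =
      ENNReal.ofReal |(Matrix.of fun i => ofLp (q i - p)).det| *
        volume (convexHull ℝ (standardSimplexVertices ι)) := by
  set M : Matrix ι ι ℝ := Matrix.of fun i => ofLp (q i - p)
  have hL : ∀ i, Mᵀ.toEuclideanLin (EuclideanSpace.single i 1) = q i - p := fun i => by
    simp [Matrix.toLpLin_apply, M]
  have hs : insert p (Set.range q) =
      p +ᵥ Mᵀ.toEuclideanLin '' standardSimplexVertices ι := by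
    rw [standardSimplexVertices, Set.image_insert_eq, map_zero, ← Set.range_comp]
    simp [Function.comp_def, hL, Set.vadd_set_insert, Set.vadd_set_range]
  rw [hs, convexHull_vadd, ← LinearMap.image_convexHull, measure_vadd,
    Measure.addHaar_image_linearMap, LinearMap.det_toLpLin, det_transpose]

theorem volume_convexHull_tetrahedron (p a b c : EuclideanSpace ℝ (Fin 3)) :
    volume (convexHull ℝ {p, a, b, c}) =
      ENNReal.ofReal |ofLp (a - p) ⬝ᵥ ofLp (b - p) ⨯₃ ofLp (c - p)| *
        volume (convexHull ℝ (standardSimplexVertices (Fin 3))) := by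
  have hs : ({p, a, b, c} : Set (EuclideanSpace ℝ (Fin 3))) = insert p (Set.range ![a, b, c]) := by
    ext; simp [or_left_comm, or_comm]
  rw [hs, volume_convexHull_insert_range, triple_product_eq_det]
  congr 4
  ext i j
  fin_cases i <;> rfl

theorem triple_product_relation_of_add_eq_zero {R : Type*} [CommRing R]
    {v₁ v₂ v₃ v₄ : Fin 3 → R} {c₁ c₂ c₃ c₄ : R}
    (h : c₁ • v₁ + c₂ • v₂ + c₃ • v₃ + c₄ • v₄ = 0) :
    c₃ * (v₁ ⬝ᵥ v₂ ⨯₃ v₃) + c₄ * (v₁ ⬝ᵥ v₂ ⨯₃ v₄) = 0 := by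
  have h' := congrArg (· ⬝ᵥ v₁ ⨯₃ v₂) h
  simp only [add_dotProduct, smul_dotProduct, dot_self_cross, dot_cross_self, smul_eq_mul,
    mul_zero, zero_add, zero_dotProduct] at h'
  rwa [triple_product_permutation v₃, triple_product_permutation v₄] at h'

theorem div_mul_abs_eq_div_mul_abs_of_add_eq_zero {b₃ b₄ n₃ n₄ D₃ D₄ : ℝ}
    (hb₃ : 0 < b₃) (hb₄ : 0 < b₄) (hn₃ : 0 ≤ n₃) (hn₄ : 0 ≤ n₄)
    (hD₃ : n₃ = 0 → D₃ = 0) (hD₄ : n₄ = 0 → D₄ = 0) (h : b₃ / n₃ * D₃ + b₄ / n₄ * D₄ = 0) :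
    b₃ / (n₃ * |D₄|) = b₄ / (n₄ * |D₃|) := by
  have habs : b₃ / n₃ * |D₃| = b₄ / n₄ * |D₄| := by
    have := congrArg abs (eq_neg_of_add_eq_zero_left h)
    rwa [abs_neg, abs_mul, abs_mul, abs_of_nonneg (div_nonneg hb₃.le hn₃),
      abs_of_nonneg (div_nonneg hb₄.le hn₄)] at this
  have zero_iff : ∀ {b n D : ℝ}, 0 < b → (n = 0 → D = 0) → (b / n * |D| = 0 ↔ D = 0) :=
    fun hb hD => by
      simp only [mul_eq_zero, div_eq_zero_iff, abs_eq_zero, hb.ne', false_or]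
      exact ⟨fun h => h.elim hD id, Or.inr⟩
  by_cases h₃ : D₃ = 0
  · have h₄ : D₄ = 0 := (zero_iff hb₄ hD₄).mp (habs ▸ (zero_iff hb₃ hD₃).mpr h₃)
    simp [h₃, h₄]
  · have h₄ : D₄ ≠ 0 := fun h₄ => h₃ ((zero_iff hb₃ hD₃).mp (habs ▸ (zero_iff hb₄ hD₄).mpr h₄))
    have hn₃' : n₃ ≠ 0 := mt hD₃ h₃
    have hn₄' : n₄ ≠ 0 := mt hD₄ h₄
    rw [div_eq_div_iff (by positivity) (by positivity)]
    field_simp at habs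
    linarith

theorem tetrahedron_weighted_volume_equality_general
    (A₀ A₁ A₂ A₃ A₄ : EuclideanSpace ℝ (Fin 3)) (b₁ b₂ b₃ b₄ : ℝ)
    (hb₃ : 0 < b₃) (hb₄ : 0 < b₄)
    (hbal : b₁ • (‖A₁ - A₀‖⁻¹ • (A₁ - A₀)) + b₂ • (‖A₂ - A₀‖⁻¹ • (A₂ - A₀))
        + b₃ • (‖A₃ - A₀‖⁻¹ • (A₃ - A₀)) + b₄ • (‖A₄ - A₀‖⁻¹ • (A₄ - A₀)) = 0) :
    b₃ / (dist A₀ A₃ *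
        (volume (convexHull ℝ ({A₀, A₁, A₂, A₄} : Set (EuclideanSpace ℝ (Fin 3))))).toReal)
      = b₄ / (dist A₀ A₄ *
        (volume (convexHull ℝ ({A₀, A₁, A₂, A₃} : Set (EuclideanSpace ℝ (Fin 3))))).toReal) := by
  set T : EuclideanSpace ℝ (Fin 3) → ℝ :=
    fun A => ofLp (A₁ - A₀) ⬝ᵥ ofLp (A₂ - A₀) ⨯₃ ofLp (A - A₀)
  have hT : ∀ A, ‖A - A₀‖ = 0 → T A = 0 := fun A hA => by
    simp [T, sub_eq_zero.mp (norm_eq_zero.mp hA)]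
  have hrel : b₃ / ‖A₃ - A₀‖ * T A₃ + b₄ / ‖A₄ - A₀‖ * T A₄ = 0 := by
    simp only [div_eq_mul_inv]
    refine triple_product_relation_of_add_eq_zero
      (c₁ := b₁ * ‖A₁ - A₀‖⁻¹) (c₂ := b₂ * ‖A₂ - A₀‖⁻¹) ?_
    simpa only [smul_smul, ofLp_add, ofLp_smul, ofLp_zero] using congrArg ofLp hbal
  set c := (volume (convexHull ℝ (standardSimplexVertices (Fin 3)))).toReal
  have hvol : ∀ A, (volume (convexHull ℝ {A₀, A₁, A₂, A})).toReal = |T A| * c := fun A => by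
    rw [volume_convexHull_tetrahedron, ENNReal.toReal_mul, ENNReal.toReal_ofReal (abs_nonneg _)]
  rw [hvol, hvol, dist_eq_norm', dist_eq_norm', ← mul_assoc, ← mul_assoc,
    div_mul_eq_div_div _ _ c, div_mul_eq_div_div _ _ c]
  exact congrArg (· / c) (div_mul_abs_eq_div_mul_abs_of_add_eq_zero hb₃ hb₄
    (norm_nonneg _) (norm_nonneg _) (hT A₃) (hT A₄) hrel)

/-- Weighted volume equality at an interior balanced point of a tetrahedron in `ℝ³`. -/
theorem tetrahedron_weighted_volume_equality
    (A₀ A₁ A₂ A₃ A₄ : EuclideanSpace ℝ (Fin 3)) (b₁ b₂ b₃ b₄ : ℝ)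
    (hb₁ : 0 < b₁) (hb₂ : 0 < b₂) (hb₃ : 0 < b₃) (hb₄ : 0 < b₄)
    (hind : AffineIndependent ℝ ![A₁, A₂, A₃, A₄])
    (hint : A₀ ∈ interior (convexHull ℝ ({A₁, A₂, A₃, A₄} : Set (EuclideanSpace ℝ (Fin 3)))))
    (hbal : b₁ • (‖A₁ - A₀‖⁻¹ • (A₁ - A₀)) + b₂ • (‖A₂ - A₀‖⁻¹ • (A₂ - A₀))
        + b₃ • (‖A₃ - A₀‖⁻¹ • (A₃ - A₀)) + b₄ • (‖A₄ - A₀‖⁻¹ • (A₄ - A₀)) = 0) :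
    b₃ / (dist A₀ A₃ *
        (volume (convexHull ℝ ({A₀, A₁, A₂, A₄} : Set (EuclideanSpace ℝ (Fin 3))))).toReal)
      = b₄ / (dist A₀ A₄ *
        (volume (convexHull ℝ ({A₀, A₁, A₂, A₃} : Set (EuclideanSpace ℝ (Fin 3))))).toReal) :=
  tetrahedron_weighted_volume_equality_general A₀ A₁ A₂ A₃ A₄ b₁ b₂ b₃ b₄ hb₃ hb₄ hbal
end

section
/- Let A₀ be an interior point of an N-simplex A₁A₂⋯A_{N+1} in ℝ^N (N ≥ 2), and let B₁,…,B_{N+1} be positive weights with Σᵢ Bᵢ·u(A₀,Aᵢ) = 0. Then for all i, j: Bᵢ / (aᵢ·Vol(A₁⋯A_{i−1} A₀ A_{i+1}⋯A_{N+1})) = Bⱼ / (aⱼ·Vol(A₁⋯A_{j−1} A₀ A_{j+1}⋯A_{N+1})), where aᵢ = |A₀Aᵢ| and Vol denotes N-dimensional volume. Moreover this common value equals (Σᵢ Bᵢ/aᵢ) / Vol(A₁A₂⋯A_{N+1}). -/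
/-!
Let `tᵢ` be the barycentric coordinates of `A₀`, positive since `A₀` is interior. The affine map
`x ↦ x + tᵢ(x) • (A₀ - Aᵢ)` fixes every vertex but `Aᵢ`, which it sends to `A₀`, and its linear
part is a transvection of determinant `1 + tᵢ(A₀) - tᵢ(Aᵢ) = tᵢ`; hence the `i`-th sub-simplex has
volume `tᵢ V`. With `cᵢ = Bᵢ / aᵢ` the balance condition reads `∑ cᵢ (Aᵢ - A₀) = 0`, so the
`cᵢ / ∑ c` are also barycentric coordinates of `A₀` and `cᵢ = (∑ c) tᵢ`. Therefore
`Bᵢ / (aᵢ tᵢ V) = (∑ c) / V` for every `i`.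
-/

open MeasureTheory

namespace AffineBasis

variable {ι k V : Type*}

section Ring

variable [Ring k] [AddCommGroup V] [Module k V]

noncomputable def replaceVertex (b : AffineBasis ι k V) (i : ι) (p : V) : V →ᵃ[k] V where
  toFun x := x + b.coord i x • (p - b i)
  linear := LinearMap.transvection (b.coord i).linear (p - b i)
  map_vadd' x y := by
    have h := (b.coord i).map_vadd x y
    rw [vadd_eq_add] at h
    simp only [vadd_eq_add, LinearMap.transvection.apply, h, add_smul]
    abel

theorem replaceVertex_apply (b : AffineBasis ι k V) (i : ι) (p x : V) :
    b.replaceVertex i p x = x + b.coord i x • (p - b i) :=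
  rfl

theorem replaceVertex_apply_basis [DecidableEq ι] (b : AffineBasis ι k V) (i : ι) (p : V)
    (j : ι) : b.replaceVertex i p (b j) = Function.update b i p j := by
  rcases eq_or_ne j i with rfl | hj
  · simp [replaceVertex_apply]
  · simp [replaceVertex_apply, hj, b.coord_apply_ne hj.symm]

theorem eq_sum_mul_coord_of_sum_smul_sub_eq_zero [Fintype ι] (b : AffineBasis ι k V)
    {p : V} {c : ι → k} (h : ∑ j, c j • (b j - p) = 0) (i : ι) :
    c i = (∑ j, c j) * b.coord i p := by
  have hc : ∑ j, c j • b j = (∑ j, c j) • p := by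
    simpa [smul_sub, Finset.sum_sub_distrib, Finset.sum_smul, sub_eq_zero] using h
  refine b.ind.eq_of_sum_eq_sum (w₂ := fun j => (∑ j, c j) * b.coord j p)
    (by rw [← Finset.mul_sum, b.sum_coord_apply_eq_one, mul_one]) ?_ i (Finset.mem_univ i)
  simp only [hc, mul_smul, ← Finset.smul_sum, b.linear_combination_coord_eq_self]

end Ring

theorem det_linear_replaceVertex [CommRing k] [AddCommGroup V] [Module k V] [Module.Free k V]
    [Module.Finite k V] (b : AffineBasis ι k V) (i : ι) (p : V) :
    LinearMap.det (b.replaceVertex i p).linear = b.coord i p := by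
  rw [replaceVertex, LinearMap.transvection.det, ← vsub_eq_sub, AffineMap.linearMap_vsub,
    coord_apply_eq, vsub_eq_sub, add_sub_cancel]

end AffineBasis

section Volume

variable {E : Type*} [NormedAddCommGroup E] [NormedSpace ℝ E] [MeasurableSpace E] [BorelSpace E]
  [FiniteDimensional ℝ E] (μ : Measure E) [μ.IsAddHaarMeasure]

theorem MeasureTheory.Measure.addHaar_image_affineMap (f : E →ᵃ[ℝ] E) (s : Set E) :
    μ (f '' s) = ENNReal.ofReal |LinearMap.det f.linear| * μ s := by
  have hf : f '' s = (· + f 0) '' (f.linear '' s) := by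
    rw [Set.image_image]
    exact Set.image_congr fun x _ => congrFun f.decomp x
  rw [hf, Set.image_add_right, measure_preimage_add_right, Measure.addHaar_image_linearMap]

theorem AffineBasis.addHaar_convexHull_update {ι : Type*} [DecidableEq ι]
    (b : AffineBasis ι ℝ E) (i : ι) (p : E) :
    μ (convexHull ℝ (Set.range (Function.update b i p)))
      = ENNReal.ofReal |b.coord i p| * μ (convexHull ℝ (Set.range b)) := by
  have himage : Set.range (Function.update b i p) = b.replaceVertex i p '' Set.range b := by
    rw [← Set.range_comp]
    exact congrArg Set.range (funext fun j => (b.replaceVertex_apply_basis i p j).symm)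
  rw [himage, ← AffineMap.image_convexHull, Measure.addHaar_image_affineMap,
    b.det_linear_replaceVertex]

end Volume

theorem simplex_weighted_volume_equalities_general
    (N : ℕ)
    (A : Fin (N + 1) → EuclideanSpace ℝ (Fin N)) (A₀ : EuclideanSpace ℝ (Fin N))
    (B : Fin (N + 1) → ℝ)
    (hind : AffineIndependent ℝ A)
    (hint : A₀ ∈ interior (convexHull ℝ (Set.range A)))
    (hbal : ∑ i, B i • (‖A i - A₀‖⁻¹ • (A i - A₀)) = 0) :
    (∀ i j : Fin (N + 1),
      B i / (dist A₀ (A i) *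
          (volume (convexHull ℝ (Set.range (Function.update A i A₀)))).toReal)
        = B j / (dist A₀ (A j) *
          (volume (convexHull ℝ (Set.range (Function.update A j A₀)))).toReal)) ∧
    (∀ i : Fin (N + 1),
      B i / (dist A₀ (A i) *
          (volume (convexHull ℝ (Set.range (Function.update A i A₀)))).toReal)
        = (∑ k, B k / dist A₀ (A k)) /
            (volume (convexHull ℝ (Set.range A))).toReal) := by
  let b : AffineBasis (Fin (N + 1)) ℝ (EuclideanSpace ℝ (Fin N)) :=
    ⟨A, hind, hind.affineSpan_eq_top_iff_card_eq_finrank_add_one.mpr (by simp)⟩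
  have hcoord : ∀ i, 0 < b.coord i A₀ := by
    have hint' : A₀ ∈ interior (convexHull ℝ (Set.range b)) := hint
    rwa [b.interior_convexHull] at hint'
  have hbal' : ∑ i, (B i / dist A₀ (A i)) • (A i - A₀) = 0 := by
    simpa [smul_smul, dist_eq_norm', div_eq_mul_inv] using hbal
  have hvol : ∀ i, (volume (convexHull ℝ (Set.range (Function.update A i A₀)))).toReal
      = b.coord i A₀ * (volume (convexHull ℝ (Set.range A))).toReal := fun i => by
    rw [show A = b from rfl, b.addHaar_convexHull_update volume, ENNReal.toReal_mul,
      ENNReal.toReal_ofReal (abs_nonneg _), abs_of_pos (hcoord i)]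
  have key : ∀ i, B i / (dist A₀ (A i) *
      (volume (convexHull ℝ (Set.range (Function.update A i A₀)))).toReal)
        = (∑ k, B k / dist A₀ (A k)) / (volume (convexHull ℝ (Set.range A))).toReal := by
    intro i
    rw [hvol, ← div_div, b.eq_sum_mul_coord_of_sum_smul_sub_eq_zero hbal' i,
      mul_comm _ (b.coord i A₀)]
    exact mul_div_mul_left _ _ (hcoord i).ne'
  exact ⟨fun i j => (key i).trans (key j).symm, key⟩

/-- Weighted volume equalities for an interior balanced point of an `N`-simplex in `ℝᴺ`. -/
theorem simplex_weighted_volume_equalities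
    (N : ℕ) (hN : 2 ≤ N)
    (A : Fin (N + 1) → EuclideanSpace ℝ (Fin N)) (A₀ : EuclideanSpace ℝ (Fin N))
    (B : Fin (N + 1) → ℝ) (hB : ∀ i, 0 < B i)
    (hind : AffineIndependent ℝ A)
    (hint : A₀ ∈ interior (convexHull ℝ (Set.range A)))
    (hbal : ∑ i, B i • (‖A i - A₀‖⁻¹ • (A i - A₀)) = 0) :
    (∀ i j : Fin (N + 1),
      B i / (dist A₀ (A i) *
          (volume (convexHull ℝ (Set.range (Function.update A i A₀)))).toReal)
        = B j / (dist A₀ (A j) *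
          (volume (convexHull ℝ (Set.range (Function.update A j A₀)))).toReal)) ∧
    (∀ i : Fin (N + 1),
      B i / (dist A₀ (A i) *
          (volume (convexHull ℝ (Set.range (Function.update A i A₀)))).toReal)
        = (∑ k, B k / dist A₀ (A k)) /
            (volume (convexHull ℝ (Set.range A))).toReal) :=
  simplex_weighted_volume_equalities_general N A A₀ B hind hint hbal
end

section
/- Let A₀, A₁, …, A_{N+1} be points in ℝ^N with A₁,…,A_{N+1} affinely independent and A₀ in the interior of the simplex they span. Given a constant C > 0, there exists a unique tuple of positive weights (B₁,…,B_{N+1}) with Σᵢ Bᵢ = C such that Σᵢ Bᵢ·u(A₀,Aᵢ) = 0, i.e., such that A₀ is the weighted Fermat point of A₁⋯A_{N+1} with these weights. -/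
/-!
The barycentric coordinates `t` of `A₀` are all positive because `A₀` is interior. By affine
independence, the linear relations `∑ cᵢ • (Aᵢ - A₀) = 0` are exactly the multiples of `t`.
After rescaling by the distances, the relations among the unit vectors `u(A₀, Aᵢ)` are exactly
the multiples of the positive vector `(tᵢ * ‖Aᵢ - A₀‖)ᵢ`, and the total weight `C` singles out
one of them.
-/

open Finset

section Relations

variable {ι k V : Type*} [Fintype ι]

theorem AffineIndependent.ker_linearCombination_sub_eq_span [Ring k] [AddCommGroup V]
    [Module k V] {p : ι → V} (hp : AffineIndependent k p) {q : V} {t : ι → k}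
    (ht : ∑ i, t i = 1) (htq : ∑ i, t i • (p i - q) = 0) :
    LinearMap.ker (Fintype.linearCombination k fun i => p i - q) = k ∙ t := by
  ext c
  simp only [LinearMap.mem_ker, Fintype.linearCombination_apply, Submodule.mem_span_singleton]
  constructor
  · intro hc
    set w : ι → k := c - (∑ i, c i) • t
    have hw_rel : ∑ i, w i • (p i - q) = 0 := by
      simp only [w, Pi.sub_apply, Pi.smul_apply, smul_eq_mul, sub_smul, mul_smul,
        sum_sub_distrib, ← smul_sum, hc, htq, smul_zero, sub_zero]
    have hw_sum : ∑ i, w i = 0 := by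
      simp only [w, Pi.sub_apply, Pi.smul_apply, smul_eq_mul, sum_sub_distrib, ← mul_sum, ht,
        mul_one, sub_self]
    have hw_comb : ∑ i, w i • p i = 0 := by
      simpa [smul_sub, sum_sub_distrib, ← sum_smul, hw_sum] using hw_rel
    refine ⟨∑ i, c i, funext fun i => ?_⟩
    have := affineIndependent_iff.mp hp univ w hw_sum hw_comb i (mem_univ i)
    simpa [w, sub_eq_zero, eq_comm] using this
  · rintro ⟨a, rfl⟩
    simp only [Pi.smul_apply, smul_eq_mul, mul_smul, ← smul_sum, htq, smul_zero]

theorem ne_zero_of_ker_linearCombination_eq_span [Nontrivial ι] [Field k] [AddCommGroup V]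
    [Module k V] {v : ι → V} {t : ι → k}
    (hker : LinearMap.ker (Fintype.linearCombination k v) = k ∙ t) (ht : ∀ i, t i ≠ 0)
    (i : ι) : v i ≠ 0 := by
  classical
  intro hvi
  have hsingle : Pi.single i 1 ∈ k ∙ t := by
    rw [← hker, LinearMap.mem_ker, Fintype.linearCombination_apply_single, one_smul, hvi]
  obtain ⟨a, ha⟩ := Submodule.mem_span_singleton.mp hsingle
  obtain ⟨j, hji⟩ := exists_ne i
  have hi := congr_fun ha i
  have hj := congr_fun ha j
  simp only [Pi.smul_apply, smul_eq_mul, Pi.single_eq_same, Pi.single_eq_of_ne hji] at hi hj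
  rcases mul_eq_zero.mp hj with ha0 | htj
  · simp [ha0] at hi
  · exact ht j htj

theorem ker_linearCombination_smul_eq_span [Field k] [AddCommGroup V] [Module k V]
    {v : ι → V} {t r : ι → k}
    (hker : LinearMap.ker (Fintype.linearCombination k v) = k ∙ t) (hr : ∀ i, r i ≠ 0) :
    LinearMap.ker (Fintype.linearCombination k fun i => r i • v i) =
      k ∙ fun i => t i / r i := by
  ext c
  have hmem := SetLike.ext_iff.mp hker (fun i => c i * r i)
  simp only [LinearMap.mem_ker, Fintype.linearCombination_apply, Submodule.mem_span_singleton,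
    mul_smul] at hmem ⊢
  rw [hmem]
  refine exists_congr fun a => ?_
  simp only [funext_iff, Pi.smul_apply, smul_eq_mul]
  refine forall_congr' fun i => ?_
  rw [mul_div_assoc', div_eq_iff (hr i)]

theorem existsUnique_pos_sum_eq_of_ker_linearCombination_eq_span [Nonempty ι] [Field k]
    [LinearOrder k] [IsStrictOrderedRing k] [AddCommGroup V] [Module k V] {v : ι → V} {t : ι → k}
    (hker : LinearMap.ker (Fintype.linearCombination k v) = k ∙ t) (ht : ∀ i, 0 < t i)
    {C : k} (hC : 0 < C) :
    ∃! B : ι → k, (∀ i, 0 < B i) ∧ ∑ i, B i = C ∧ ∑ i, B i • v i = 0 := by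
  have hrel (B : ι → k) : ∑ i, B i • v i = 0 ↔ ∃ a : k, a • t = B := by
    rw [← Fintype.linearCombination_apply k, ← LinearMap.mem_ker, hker,
      Submodule.mem_span_singleton]
  have hT : 0 < ∑ i, t i := sum_pos (fun i _ => ht i) univ_nonempty
  refine ⟨(C / ∑ i, t i) • t,
    ⟨fun i => mul_pos (div_pos hC hT) (ht i), ?_, (hrel _).mpr ⟨_, rfl⟩⟩, ?_⟩
  · simp only [Pi.smul_apply, smul_eq_mul, ← mul_sum, div_mul_cancel₀ _ hT.ne']
  · rintro B ⟨-, hBC, hB⟩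
    obtain ⟨a, rfl⟩ := (hrel B).mp hB
    simp only [Pi.smul_apply, smul_eq_mul, ← mul_sum] at hBC
    rw [← hBC, mul_div_cancel_right₀ _ hT.ne']

theorem AffineIndependent.exists_pos_sum_smul_sub_eq_zero_of_mem_interior_convexHull
    {E : Type*} [NormedAddCommGroup E] [NormedSpace ℝ E] [FiniteDimensional ℝ E] {p : ι → E}
    (hp : AffineIndependent ℝ p) {q : E} (hq : q ∈ interior (convexHull ℝ (Set.range p))) :
    ∃ t : ι → ℝ, (∀ i, 0 < t i) ∧ ∑ i, t i = 1 ∧ ∑ i, t i • (p i - q) = 0 := by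
  let b : AffineBasis ι ℝ E :=
    ⟨p, hp, interior_convexHull_nonempty_iff_affineSpan_eq_top.mp ⟨q, hq⟩⟩
  have hq' : q ∈ interior (convexHull ℝ (Set.range b)) := hq
  rw [b.interior_convexHull] at hq'
  refine ⟨fun i => b.coord i q, hq', b.sum_coord_apply_eq_one q, ?_⟩
  simp only [smul_sub, sum_sub_distrib, ← sum_smul, b.sum_coord_apply_eq_one, one_smul]
  exact sub_eq_zero.mpr (b.linear_combination_coord_eq_self q)

end Relations

/-- Unique solvability of the `N`-dimensional inverse weighted Fermat problem:
an interior point of an `N`-simplex is the weighted Fermat point for a unique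
tuple of positive weights of prescribed total sum. -/
theorem inverse_weighted_fermat_simplex_existsUnique
    (N : ℕ) (hN : 2 ≤ N)
    (A : Fin (N + 1) → EuclideanSpace ℝ (Fin N)) (A₀ : EuclideanSpace ℝ (Fin N))
    (hind : AffineIndependent ℝ A)
    (hint : A₀ ∈ interior (convexHull ℝ (Set.range A)))
    (C : ℝ) (hC : 0 < C) :
    ∃! B : Fin (N + 1) → ℝ,
      (∀ i, 0 < B i) ∧ (∑ i, B i = C) ∧
      ∑ i, B i • (‖A i - A₀‖⁻¹ • (A i - A₀)) = 0 := by
  have : Nontrivial (Fin (N + 1)) := Fin.nontrivial_iff_two_le.mpr (by omega)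
  obtain ⟨t, ht_pos, ht_sum, ht_rel⟩ :=
    hind.exists_pos_sum_smul_sub_eq_zero_of_mem_interior_convexHull hint
  have hker := hind.ker_linearCombination_sub_eq_span ht_sum ht_rel
  have hdist (i : Fin (N + 1)) : 0 < ‖A i - A₀‖ :=
    norm_pos_iff.mpr (ne_zero_of_ker_linearCombination_eq_span hker (fun j => (ht_pos j).ne') i)
  have hker_unit :=
    ker_linearCombination_smul_eq_span hker (fun i => (inv_pos.mpr (hdist i)).ne')
  exact existsUnique_pos_sum_eq_of_ker_linearCombination_eq_span hker_unit
    (fun i => div_pos (ht_pos i) (inv_pos.mpr (hdist i))) hC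
end

section
/- Let A₀, A₁, …, A₅ be points in ℝ⁴, with A₁,…,A₅ affinely independent and A₀ interior to the 4-simplex A₁A₂A₃A₄A₅. Suppose positive weights B₁,…,B₅ satisfy Σᵢ Bᵢ·u(A₀,Aᵢ) = 0. Let n be a unit normal to the 3-dimensional affine hyperplane through A₀, A₁, A₂, A₃ (which exists since these four points are affinely independent). Then B₄·|⟨u(A₀,A₄), n⟩| = B₅·|⟨u(A₀,A₅), n⟩|. -/
open RealInnerProductSpace

section

variable {E : Type*} [NormedAddCommGroup E] [InnerProductSpace ℝ E]

theorem abs_inner_eq_abs_inner_of_add_add_eq_zero {a b c n : E} (ha : ⟪a, n⟫ = 0)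
    (h : a + b + c = 0) : |⟪b, n⟫| = |⟪c, n⟫| := by
  have hbc : ⟪b, n⟫ = -⟪c, n⟫ := by
    have := congrArg (⟪·, n⟫) h
    simp only [inner_add_left, inner_zero_left, ha] at this
    linarith
  rw [hbc, abs_neg]

theorem abs_real_inner_smul_left_of_nonneg {r : ℝ} (hr : 0 ≤ r) (x y : E) :
    |⟪r • x, y⟫| = r * |⟪x, y⟫| := by
  rw [real_inner_smul_left, abs_mul, abs_of_nonneg hr]

end

theorem invwf_r4_normal_projection_general
    (A₀ A₁ A₂ A₃ A₄ A₅ : EuclideanSpace ℝ (Fin 4))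
    (B₁ B₂ B₃ B₄ B₅ : ℝ)
    (hB₄ : 0 < B₄) (hB₅ : 0 < B₅)
    (hbal : B₁ • (‖A₁ - A₀‖⁻¹ • (A₁ - A₀)) + B₂ • (‖A₂ - A₀‖⁻¹ • (A₂ - A₀))
        + B₃ • (‖A₃ - A₀‖⁻¹ • (A₃ - A₀)) + B₄ • (‖A₄ - A₀‖⁻¹ • (A₄ - A₀))
        + B₅ • (‖A₅ - A₀‖⁻¹ • (A₅ - A₀)) = 0)
    (n : EuclideanSpace ℝ (Fin 4))
    (hn₁ : ⟪A₁ - A₀, n⟫ = 0) (hn₂ : ⟪A₂ - A₀, n⟫ = 0) (hn₃ : ⟪A₃ - A₀, n⟫ = 0) :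
    B₄ * |⟪‖A₄ - A₀‖⁻¹ • (A₄ - A₀), n⟫| = B₅ * |⟪‖A₅ - A₀‖⁻¹ • (A₅ - A₀), n⟫| := by
  have hperp : ⟪B₁ • (‖A₁ - A₀‖⁻¹ • (A₁ - A₀)) + B₂ • (‖A₂ - A₀‖⁻¹ • (A₂ - A₀))
      + B₃ • (‖A₃ - A₀‖⁻¹ • (A₃ - A₀)), n⟫ = 0 := by
    simp only [inner_add_left, real_inner_smul_left, hn₁, hn₂, hn₃, mul_zero, add_zero]
  rw [← abs_real_inner_smul_left_of_nonneg hB₄.le, ← abs_real_inner_smul_left_of_nonneg hB₅.le]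
  exact abs_inner_eq_abs_inner_of_add_add_eq_zero hperp hbal

/-- Key step of the 4-INVWF problem in `ℝ⁴`: projecting the balancing condition onto
the unit normal of the hyperplane through `A₀, A₁, A₂, A₃` relates `B₄` and `B₅`. -/
theorem invwf_r4_normal_projection
    (A₀ A₁ A₂ A₃ A₄ A₅ : EuclideanSpace ℝ (Fin 4))
    (B₁ B₂ B₃ B₄ B₅ : ℝ)
    (hB₁ : 0 < B₁) (hB₂ : 0 < B₂) (hB₃ : 0 < B₃) (hB₄ : 0 < B₄) (hB₅ : 0 < B₅)
    (hind : AffineIndependent ℝ ![A₁, A₂, A₃, A₄, A₅])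
    (hint : A₀ ∈ interior (convexHull ℝ
        ({A₁, A₂, A₃, A₄, A₅} : Set (EuclideanSpace ℝ (Fin 4)))))
    (hbal : B₁ • (‖A₁ - A₀‖⁻¹ • (A₁ - A₀)) + B₂ • (‖A₂ - A₀‖⁻¹ • (A₂ - A₀))
        + B₃ • (‖A₃ - A₀‖⁻¹ • (A₃ - A₀)) + B₄ • (‖A₄ - A₀‖⁻¹ • (A₄ - A₀))
        + B₅ • (‖A₅ - A₀‖⁻¹ • (A₅ - A₀)) = 0)
    (n : EuclideanSpace ℝ (Fin 4)) (hn : ‖n‖ = 1)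
    (hn₁ : ⟪A₁ - A₀, n⟫ = 0) (hn₂ : ⟪A₂ - A₀, n⟫ = 0) (hn₃ : ⟪A₃ - A₀, n⟫ = 0) :
    B₄ * |⟪‖A₄ - A₀‖⁻¹ • (A₄ - A₀), n⟫| = B₅ * |⟪‖A₅ - A₀‖⁻¹ • (A₅ - A₀), n⟫| :=
  invwf_r4_normal_projection_general A₀ A₁ A₂ A₃ A₄ A₅ B₁ B₂ B₃ B₄ B₅ hB₄ hB₅ hbal n hn₁ hn₂ hn₃
end

section
/- Let A₀ be interior to tetrahedron A₁A₂A₃A₄ in ℝ³, with positive weights b₁,…,b₄ balancing at A₀ (Σ bᵢ u(A₀,Aᵢ) = 0). Then the ratio of squared weights satisfies (b_j/b_i)² = (sin²α_{k0m} − cos²α_{m0i} − cos²α_{k0i} + 2cos α_{m0i}·cos α_{k0i}·cos α_{k0m}) / (sin²α_{k0m} − cos²α_{m0j} − cos²α_{k0j} + 2cos α_{m0j}·cos α_{k0j}·cos α_{k0m}) for {i,j,k,m} = {1,2,3,4}, where α_{p0q} = ∠A_pA₀A_q. -/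
/-!
Normalise the edges at `A₀` to unit vectors `uₗ`. Dotting the balance equation with the normal
`u_k × u_m` of the plane `A₀A_kA_m` kills two of its four terms, leaving
`b_i ⟪u_i, u_k × u_m⟫ = -b_j ⟪u_j, u_k × u_m⟫`. The angular expression attached to `p` is the Gram
determinant of `u_p, u_k, u_m`, i.e. `⟪u_p, u_k × u_m⟫²`, so squaring gives the ratio.
-/

open Finset Matrix

theorem AffineIndependent.ne_of_mem_interior_convexHull {ι V : Type*} [Finite ι] [Nontrivial ι]
    [NormedAddCommGroup V] [NormedSpace ℝ V] [FiniteDimensional ℝ V] {A : ι → V}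
    (hA : AffineIndependent ℝ A) {x : V} (hx : x ∈ interior (convexHull ℝ (Set.range A)))
    (i : ι) : A i ≠ x := by
  let B : AffineBasis ι ℝ V :=
    ⟨A, hA, interior_convexHull_nonempty_iff_affineSpan_eq_top.1 ⟨x, hx⟩⟩
  rw [show Set.range A = Set.range B from rfl, B.interior_convexHull] at hx
  obtain ⟨j, hji⟩ := exists_ne i
  rintro rfl
  exact (hx j).ne' (B.coord_apply_ne hji)

theorem Fin.sum_univ_four_of_insert_eq_univ {M : Type*} [AddCommMonoid M] {i j k m : Fin 4}
    (h : ({i, j, k, m} : Finset (Fin 4)) = univ) (f : Fin 4 → M) :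
    ∑ l, f l = f i + f j + f k + f m := by
  obtain ⟨hij, hik, him, hjk, hjm, hkm⟩ :
      i ≠ j ∧ i ≠ k ∧ i ≠ m ∧ j ≠ k ∧ j ≠ m ∧ k ≠ m := by
    revert i j k m; decide
  rw [← h, sum_insert (by simp [hij, hik, him]), sum_insert (by simp [hjk, hjm]),
    sum_pair hkm, add_assoc, add_assoc]

theorem dotProduct_cross_sq {R : Type*} [CommRing R] (x y z : Fin 3 → R) :
    (x ⬝ᵥ y ⨯₃ z) ^ 2 =
      (x ⬝ᵥ x) * (y ⬝ᵥ y) * (z ⬝ᵥ z) + 2 * (x ⬝ᵥ y) * (y ⬝ᵥ z) * (z ⬝ᵥ x)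
        - (x ⬝ᵥ x) * (y ⬝ᵥ z) ^ 2 - (y ⬝ᵥ y) * (z ⬝ᵥ x) ^ 2 - (z ⬝ᵥ z) * (x ⬝ᵥ y) ^ 2 := by
  simp only [dotProduct, cross_apply, Fin.sum_univ_three, Matrix.cons_val_zero,
    Matrix.cons_val_one, Matrix.cons_val]
  ring

theorem mul_dotProduct_cross_add_mul_dotProduct_cross_eq_zero {R : Type*} [CommRing R]
    {b : Fin 4 → R} {u : Fin 4 → Fin 3 → R} (hbal : ∑ l, b l • u l = 0) {i j k m : Fin 4}
    (h : ({i, j, k, m} : Finset (Fin 4)) = univ) :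
    b i * (u i ⬝ᵥ u k ⨯₃ u m) + b j * (u j ⬝ᵥ u k ⨯₃ u m) = 0 := by
  have := congrArg (· ⬝ᵥ u k ⨯₃ u m) hbal
  simpa only [Fin.sum_univ_four_of_insert_eq_univ h, add_dotProduct, smul_dotProduct,
    smul_eq_mul, dot_self_cross, dot_cross_self, mul_zero, add_zero, zero_dotProduct] using this

section

open InnerProductGeometry

theorem angle_inv_norm_smul_inv_norm_smul {V : Type*} [NormedAddCommGroup V]
    [InnerProductSpace ℝ V] (x y : V) : angle (‖x‖⁻¹ • x) (‖y‖⁻¹ • y) = angle x y := by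
  rcases eq_or_ne x 0 with rfl | hx
  · simp
  rcases eq_or_ne y 0 with rfl | hy
  · simp
  rw [angle_smul_left_of_pos _ _ (by positivity), angle_smul_right_of_pos _ _ (by positivity)]

theorem sin_sq_angle_sub_cos_sq_angle_eq_dotProduct_cross_sq
    {x y z : EuclideanSpace ℝ (Fin 3)} (hx : ‖x‖ = 1) (hy : ‖y‖ = 1) (hz : ‖z‖ = 1) :
    Real.sin (angle y z) ^ 2 - Real.cos (angle z x) ^ 2 - Real.cos (angle y x) ^ 2
        + 2 * Real.cos (angle z x) * Real.cos (angle y x) * Real.cos (angle y z) =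
      (x.ofLp ⬝ᵥ y.ofLp ⨯₃ z.ofLp) ^ 2 := by
  have hcos : ∀ {a c : EuclideanSpace ℝ (Fin 3)}, ‖a‖ = 1 → ‖c‖ = 1 →
      Real.cos (angle a c) = a.ofLp ⬝ᵥ c.ofLp := by
    intro a c ha hc
    rw [cos_angle, ha, hc, EuclideanSpace.inner_eq_star_dotProduct, dotProduct_comm]
    simp
  have hself : ∀ {a : EuclideanSpace ℝ (Fin 3)}, ‖a‖ = 1 → a.ofLp ⬝ᵥ a.ofLp = 1 := by
    intro a ha
    rw [← hcos ha ha, angle_self (by rintro rfl; simp at ha), Real.cos_zero]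
  rw [Real.sin_sq, hcos hy hz, hcos hz hx, hcos hy hx, dotProduct_cross_sq, hself hx, hself hy,
    hself hz, dotProduct_comm y.ofLp x.ofLp]
  ring

end

open EuclideanGeometry

/-- Explicit solution of the inverse weighted Fermat problem for tetrahedra in `ℝ³`:
the ratio of squared weights in terms of the six angles at the interior point `A₀`. -/
theorem invwf_tetrahedron_weight_ratio
    (A : Fin 4 → EuclideanSpace ℝ (Fin 3)) (A₀ : EuclideanSpace ℝ (Fin 3))
    (b : Fin 4 → ℝ) (hb : ∀ i, 0 < b i)
    (hind : AffineIndependent ℝ A)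
    (hint : A₀ ∈ interior (convexHull ℝ (Set.range A)))
    (hbal : ∑ i, b i • (‖A i - A₀‖⁻¹ • (A i - A₀)) = 0)
    (i j k m : Fin 4)
    (hijkm : ({i, j, k, m} : Finset (Fin 4)) = Finset.univ)
    (hden : Real.sin (∠ (A k) A₀ (A m)) ^ 2 - Real.cos (∠ (A m) A₀ (A j)) ^ 2
        - Real.cos (∠ (A k) A₀ (A j)) ^ 2
        + 2 * Real.cos (∠ (A m) A₀ (A j)) * Real.cos (∠ (A k) A₀ (A j))
          * Real.cos (∠ (A k) A₀ (A m)) ≠ 0) :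
    (b j / b i) ^ 2 =
      (Real.sin (∠ (A k) A₀ (A m)) ^ 2 - Real.cos (∠ (A m) A₀ (A i)) ^ 2
        - Real.cos (∠ (A k) A₀ (A i)) ^ 2
        + 2 * Real.cos (∠ (A m) A₀ (A i)) * Real.cos (∠ (A k) A₀ (A i))
          * Real.cos (∠ (A k) A₀ (A m))) /
      (Real.sin (∠ (A k) A₀ (A m)) ^ 2 - Real.cos (∠ (A m) A₀ (A j)) ^ 2
        - Real.cos (∠ (A k) A₀ (A j)) ^ 2
        + 2 * Real.cos (∠ (A m) A₀ (A j)) * Real.cos (∠ (A k) A₀ (A j))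
          * Real.cos (∠ (A k) A₀ (A m))) := by
  set u : Fin 4 → EuclideanSpace ℝ (Fin 3) := fun l => ‖A l - A₀‖⁻¹ • (A l - A₀)
  have hu : ∀ l, ‖u l‖ = 1 := fun l =>
    norm_smul_inv_norm (sub_ne_zero.2 (hind.ne_of_mem_interior_convexHull hint l))
  have hangle : ∀ p q, ∠ (A p) A₀ (A q) = InnerProductGeometry.angle (u p) (u q) := fun p q =>
    (angle_inv_norm_smul_inv_norm_smul _ _).symm
  have hplane : b i * ((u i).ofLp ⬝ᵥ (u k).ofLp ⨯₃ (u m).ofLp)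
      + b j * ((u j).ofLp ⬝ᵥ (u k).ofLp ⨯₃ (u m).ofLp) = 0 :=
    mul_dotProduct_cross_add_mul_dotProduct_cross_eq_zero
      (by simpa using congrArg WithLp.ofLp hbal) hijkm
  simp only [hangle, sin_sq_angle_sub_cos_sq_angle_eq_dotProduct_cross_sq (hu _) (hu _) (hu _)]
    at hden ⊢
  rw [div_pow, div_eq_div_iff (pow_ne_zero 2 (hb i).ne') hden]
  linear_combination (b j * ((u j).ofLp ⬝ᵥ (u k).ofLp ⨯₃ (u m).ofLp)
    - b i * ((u i).ofLp ⬝ᵥ (u k).ofLp ⨯₃ (u m).ofLp)) * hplane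
end

section
/- Let A₁⋯A_{N+1} be an N-simplex inscribed in the sphere S^{N−1}(O, r) in ℝ^N, and for ε ∈ (0, |A_{N+1}O|) let A₀(ε) be the point on segment [A_{N+1}, O] at distance ε from A_{N+1}. Let (B₁(ε),…,B_{N+1}(ε)) be the unique positive weights with sum C for which A₀(ε) satisfies the balancing condition Σᵢ Bᵢ(ε)·u(A₀(ε), Aᵢ) = 0 (assuming A₀(ε) is interior to the simplex). Then as ε → 0⁺, the weighted-absorption defect |‖Σ_{i=1}^{N} Bᵢ(ε)·u(A_{N+1}, Aᵢ)‖ − B_{N+1}(ε)| tends to 0; equivalently, in the limit the configuration satisfies the absorbed Fermat condition at the vertex A_{N+1}. -/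
/-!
Moving the Fermat point from `A_{N+1}` towards `O` does not change the direction of
`A_{N+1}` seen from `A₀(ε)`, so the balancing condition says exactly that the weighted sum of
the other `N` unit vectors at `A₀(ε)` has norm `B_{N+1}(ε)`. Replacing those unit vectors by the
ones seen from `A_{N+1}` changes that norm by at most `C` times the total displacement of the
unit vectors, which tends to `0` because `u(·, Aᵢ)` is continuous away from `Aᵢ`.
-/

open Filter Topology

section

variable {E : Type*} [NormedAddCommGroup E] [NormedSpace ℝ E]

theorem tendsto_inv_norm_smul_sub {α : Type*} {l : Filter α} {P : α → E} {P₀ Q : E}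
    (hP : Tendsto P l (𝓝 P₀)) (hQ : Q ≠ P₀) :
    Tendsto (fun a => ‖Q - P a‖⁻¹ • (Q - P a)) l (𝓝 (‖Q - P₀‖⁻¹ • (Q - P₀))) := by
  have hsub : Tendsto (fun a => Q - P a) l (𝓝 (Q - P₀)) := tendsto_const_nhds.sub hP
  exact (hsub.norm.inv₀ (norm_ne_zero_iff.mpr (sub_ne_zero.mpr hQ))).smul hsub

theorem abs_norm_sum_smul_sub_norm_sum_smul_le {ι : Type*} (s : Finset ι) (b : ι → ℝ)
    (w u : ι → E) {M : ℝ} (hb : ∀ i ∈ s, |b i| ≤ M) :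
    |‖∑ i ∈ s, b i • w i‖ - ‖∑ i ∈ s, b i • u i‖| ≤ M * ∑ i ∈ s, ‖w i - u i‖ :=
  calc |‖∑ i ∈ s, b i • w i‖ - ‖∑ i ∈ s, b i • u i‖|
      ≤ ‖∑ i ∈ s, b i • w i - ∑ i ∈ s, b i • u i‖ := abs_norm_sub_norm_le _ _
    _ = ‖∑ i ∈ s, b i • (w i - u i)‖ := by simp only [smul_sub, Finset.sum_sub_distrib]
    _ ≤ ∑ i ∈ s, ‖b i • (w i - u i)‖ := norm_sum_le _ _
    _ ≤ ∑ i ∈ s, M * ‖w i - u i‖ := Finset.sum_le_sum fun i hi => by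
        rw [norm_smul, Real.norm_eq_abs]
        exact mul_le_mul_of_nonneg_right (hb i hi) (norm_nonneg _)
    _ = M * ∑ i ∈ s, ‖w i - u i‖ := (Finset.mul_sum _ _ _).symm

theorem norm_sum_castSucc_smul_eq_of_sum_smul_eq_zero {n : ℕ} (b : Fin (n + 1) → ℝ)
    (u : Fin (n + 1) → E) (hbal : ∑ i, b i • u i = 0) (hu : ‖u (Fin.last n)‖ = 1)
    (hb : 0 ≤ b (Fin.last n)) :
    ‖∑ i : Fin n, b i.castSucc • u i.castSucc‖ = b (Fin.last n) := by
  rw [Fin.sum_univ_castSucc] at hbal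
  rw [eq_neg_of_add_eq_zero_left hbal, norm_neg, norm_smul, hu, mul_one, Real.norm_of_nonneg hb]

theorem abs_norm_sum_castSucc_smul_sub_le {n : ℕ} (b : Fin (n + 1) → ℝ) (hb : ∀ i, 0 ≤ b i)
    (u : Fin (n + 1) → E) (hbal : ∑ i, b i • u i = 0) (hu : ‖u (Fin.last n)‖ = 1)
    (w : Fin n → E) :
    |‖∑ i : Fin n, b i.castSucc • w i‖ - b (Fin.last n)| ≤
      (∑ i, b i) * ∑ i : Fin n, ‖u i.castSucc - w i‖ := by
  rw [← norm_sum_castSucc_smul_eq_of_sum_smul_eq_zero b u hbal hu (hb _), abs_sub_comm]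
  refine abs_norm_sum_smul_sub_norm_sum_smul_le _ _ _ _ fun i _ => ?_
  rw [abs_of_nonneg (hb _)]
  exact Finset.single_le_sum (fun j _ => hb j) (Finset.mem_univ _)

end

theorem epsilon_approximation_absorbed_fermat_general
    (N : ℕ)
    (A : Fin (N + 1) → EuclideanSpace ℝ (Fin N))
    (O : EuclideanSpace ℝ (Fin N)) (r : ℝ) (hr : 0 < r)
    (hsphere : ∀ i, dist (A i) O = r)
    (hind : AffineIndependent ℝ A)
    (C : ℝ)
    (A₀ : ℝ → EuclideanSpace ℝ (Fin N))
    (hA₀ : ∀ ε : ℝ, A₀ ε = A (Fin.last N) +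
      (ε / dist (A (Fin.last N)) O) • (O - A (Fin.last N)))
    (B : ℝ → Fin (N + 1) → ℝ)
    (hB : ∀ ε ∈ Set.Ioo (0 : ℝ) (dist (A (Fin.last N)) O),
      A₀ ε ∈ interior (convexHull ℝ (Set.range A)) ∧
      (∀ i, 0 < B ε i) ∧ (∑ i, B ε i = C) ∧
      ∑ i, B ε i • (‖A i - A₀ ε‖⁻¹ • (A i - A₀ ε)) = 0) :
    Tendsto (fun ε : ℝ =>
        |‖∑ i : Fin N, B ε i.castSucc •
            (‖A i.castSucc - A (Fin.last N)‖⁻¹ • (A i.castSucc - A (Fin.last N)))‖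
          - B ε (Fin.last N)|)
      (nhdsWithin 0 (Set.Ioi 0)) (nhds 0) := by
  set d := dist (A (Fin.last N)) O
  have hd : 0 < d := by simpa only [d, hsphere] using hr
  have hA₀_lim : Tendsto A₀ (𝓝[>] 0) (𝓝 (A (Fin.last N))) := by
    have hcont : Continuous A₀ := by rw [funext hA₀]; fun_prop
    have := tendsto_nhdsWithin_of_tendsto_nhds (s := Set.Ioi 0) (hcont.tendsto 0)
    rwa [hA₀, zero_div, zero_smul, add_zero] at this
  have hdisp : Tendsto (fun ε => C * ∑ i : Fin N,
      ‖‖A i.castSucc - A₀ ε‖⁻¹ • (A i.castSucc - A₀ ε) -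
        ‖A i.castSucc - A (Fin.last N)‖⁻¹ • (A i.castSucc - A (Fin.last N))‖) (𝓝[>] 0) (𝓝 0) := by
    have hvert : ∀ i : Fin N, A i.castSucc ≠ A (Fin.last N) := fun i h =>
      (Fin.castSucc_lt_last i).ne (hind.injective h)
    have hunit := fun i => tendsto_iff_norm_sub_tendsto_zero.mp
      (tendsto_inv_norm_smul_sub hA₀_lim (hvert i))
    simpa using tendsto_const_nhds (x := C) |>.mul <|
      tendsto_finsetSum Finset.univ fun i _ => hunit i
  refine squeeze_zero' (Eventually.of_forall fun _ => abs_nonneg _) ?_ hdisp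
  filter_upwards [Ioo_mem_nhdsGT hd] with ε hε
  obtain ⟨-, hpos, hsum, hbal⟩ := hB ε hε
  have hfar : A (Fin.last N) - A₀ ε ≠ 0 := by
    rw [hA₀, sub_add_cancel_left, neg_ne_zero]
    exact smul_ne_zero (div_pos hε.1 hd).ne' (sub_ne_zero.mpr (dist_pos.mp hd).symm)
  rw [← hsum]
  exact abs_norm_sum_castSucc_smul_sub_le _ (fun i => (hpos i).le) _ hbal
    (norm_smul_inv_norm hfar) _

/-- ε-approximation of the absorbed weighted Fermat tree by floating ones: for an
`N`-simplex inscribed in a sphere, moving the Fermat point from the vertex `A_{N+1}`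
toward the center by `ε` and taking the unique balancing weights of total sum `C`,
the weighted-absorption defect at `A_{N+1}` tends to `0` as `ε → 0⁺`. -/
theorem epsilon_approximation_absorbed_fermat
    (N : ℕ) (hN : 2 ≤ N)
    (A : Fin (N + 1) → EuclideanSpace ℝ (Fin N))
    (O : EuclideanSpace ℝ (Fin N)) (r : ℝ) (hr : 0 < r)
    (hsphere : ∀ i, dist (A i) O = r)
    (hind : AffineIndependent ℝ A)
    (C : ℝ) (hC : 0 < C)
    (A₀ : ℝ → EuclideanSpace ℝ (Fin N))
    (hA₀ : ∀ ε : ℝ, A₀ ε = A (Fin.last N) +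
      (ε / dist (A (Fin.last N)) O) • (O - A (Fin.last N)))
    (B : ℝ → Fin (N + 1) → ℝ)
    (hB : ∀ ε ∈ Set.Ioo (0 : ℝ) (dist (A (Fin.last N)) O),
      A₀ ε ∈ interior (convexHull ℝ (Set.range A)) ∧
      (∀ i, 0 < B ε i) ∧ (∑ i, B ε i = C) ∧
      ∑ i, B ε i • (‖A i - A₀ ε‖⁻¹ • (A i - A₀ ε)) = 0) :
    Tendsto (fun ε : ℝ =>
        |‖∑ i : Fin N, B ε i.castSucc •
            (‖A i.castSucc - A (Fin.last N)‖⁻¹ • (A i.castSucc - A (Fin.last N)))‖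
          - B ε (Fin.last N)|)
      (nhdsWithin 0 (Set.Ioi 0)) (nhds 0) :=
  epsilon_approximation_absorbed_fermat_general N A O r hr hsphere hind C A₀ hA₀ B hB
end
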